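/- arXiv:1606.07528 — 2 statements merged into one kernel-verified Lean document; each statement's English description precedes it below -/
import Mathlib

section
/- Soundness of the proof system SELA: every formula of the epistemic action language EAL that is derivable in SELA is valid on uncertainty maps, i.e., true at every pointed uncertainty map. -/
/-- Formulas of the epistemic action language EAL. -/
inductive EAL (P A : Type) : Type
  | top : EAL P A
  | atom : P → EAL P A
  | neg : EAL P A → EAL P A
  | and : EAL P A → EAL P A → EAL P A
  | box : A → EAL P A → EAL P A
  | know : EAL P A → EAL P A

namespace EAL
variable {P A : Type}
/-- φ ∨ ψ := ¬(¬φ ∧ ¬ψ) -/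
def or (φ ψ : EAL P A) : EAL P A := neg (and (neg φ) (neg ψ))
/-- φ → ψ := ¬φ ∨ ψ -/
def imp (φ ψ : EAL P A) : EAL P A := or (neg φ) ψ
def iff (φ ψ : EAL P A) : EAL P A := and (imp φ ψ) (imp ψ φ)
/-- ⟨a⟩φ := ¬[a]¬φ -/
def dia (a : A) (φ : EAL P A) : EAL P A := neg (box a (neg φ))
end EAL

/-- A Kripke model with labelled relations. -/
structure Kripke (P A : Type) where
  S : Type
  R : A → S → S → Prop
  V : S → P → Prop

namespace Kripke
variable {P A : Type}
/-- U|^a -/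
def img (N : Kripke P A) (a : A) (U : Set N.S) : Set N.S := {t | ∃ u ∈ U, N.R a u t}
end Kripke

/-- Semantics of EAL on an uncertainty map (Kripke model + uncertainty set). -/
def ealSat {P A : Type} (N : Kripke P A) : Set N.S → N.S → EAL P A → Prop
  | _, _, .top => True
  | _, s, .atom p => N.V s p
  | U, s, .neg φ => ¬ ealSat N U s φ
  | U, s, .and φ ψ => ealSat N U s φ ∧ ealSat N U s ψ
  | U, s, .box a φ => ∀ t, N.R a s t → ealSat N (N.img a U) t φ
  | U, _, .know φ => ∀ u ∈ U, ealSat N U u φ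

/-- Validity: truth at every pointed uncertainty map. -/
def ealValid {P A : Type} (φ : EAL P A) : Prop :=
  ∀ (N : Kripke P A) (U : Set N.S), U.Nonempty → ∀ s ∈ U, ealSat N U s φ

/-- Evaluation of a formula as a propositional formula, treating atoms,
box-formulas and K-formulas as propositional variables with truth values given by `v`. -/
def EAL.propEval {P A : Type} (v : EAL P A → Prop) : EAL P A → Prop
  | .top => True
  | .neg φ => ¬ EAL.propEval v φ
  | .and φ ψ => EAL.propEval v φ ∧ EAL.propEval v ψ
  | φ => v φ

/-- Uniform substitution of formulas for proposition letters. -/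
def EAL.subst {P A : Type} (σ : P → EAL P A) : EAL P A → EAL P A
  | .top => .top
  | .atom p => σ p
  | .neg φ => .neg (EAL.subst σ φ)
  | .and φ ψ => .and (EAL.subst σ φ) (EAL.subst σ ψ)
  | .box a φ => .box a (EAL.subst σ φ)
  | .know φ => .know (EAL.subst σ φ)

/-- The proof system SELA. -/
inductive SELA {P A : Type} : EAL P A → Prop
  | taut {φ : EAL P A} : (∀ v : EAL P A → Prop, EAL.propEval v φ) → SELA φ
  | distK (p q : P) :
      SELA (EAL.imp (EAL.know (EAL.imp (EAL.atom p) (EAL.atom q)))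
        (EAL.imp (EAL.know (EAL.atom p)) (EAL.know (EAL.atom q))))
  | distBox (a : A) (p q : P) :
      SELA (EAL.imp (EAL.box a (EAL.imp (EAL.atom p) (EAL.atom q)))
        (EAL.imp (EAL.box a (EAL.atom p)) (EAL.box a (EAL.atom q))))
  | axT (p : P) : SELA (EAL.imp (EAL.know (EAL.atom p)) (EAL.atom p))
  | ax4 (p : P) : SELA (EAL.imp (EAL.know (EAL.atom p)) (EAL.know (EAL.know (EAL.atom p))))
  | ax5 (p : P) :
      SELA (EAL.imp (EAL.neg (EAL.know (EAL.atom p))) (EAL.know (EAL.neg (EAL.know (EAL.atom p)))))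
  | zig (a : A) (p : P) :
      SELA (EAL.imp (EAL.know (EAL.box a (EAL.atom p))) (EAL.box a (EAL.know (EAL.atom p))))
  | zag (a : A) (p : P) :
      SELA (EAL.imp (EAL.dia a (EAL.know (EAL.atom p))) (EAL.know (EAL.box a (EAL.atom p))))
  | mp {φ ψ : EAL P A} : SELA (EAL.imp φ ψ) → SELA φ → SELA ψ
  | necK {φ : EAL P A} : SELA φ → SELA (EAL.know φ)
  | necBox (a : A) {φ : EAL P A} : SELA φ → SELA (EAL.box a φ)
  | sub (σ : P → EAL P A) {φ : EAL P A} : SELA φ → SELA (EAL.subst σ φ)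

/-- Finite conjunction of a list of formulas. -/
def conjList {P A : Type} : List (EAL P A) → EAL P A
  | [] => .top
  | φ :: L => .and φ (conjList L)

/-- Γ is SELA-consistent: no finite conjunction of members of Γ has its negation derivable. -/
def SELAConsistent {P A : Type} (Γ : Set (EAL P A)) : Prop :=
  ∀ L : List (EAL P A), (∀ φ ∈ L, φ ∈ Γ) → ¬ SELA (EAL.neg (conjList L))

/-!
K quantifies over the fixed set `U`, so it is an S5 modality, and since an action moves `U`
to its image `U|^a`, perfect recall and no miracles hold by unfolding the semantics;
necessitation for `[a]` uses that a successor of `s ∈ U` lies in the nonempty set `U|^a`.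

Uniform substitution is the one delicate rule: the truth of `σ p` at `s` depends on the
current uncertainty set, so it is not a valuation on `N`. It is one on the model whose states
are pairs `(U, s)` and whose `a`-steps move `U` to `U|^a`; there `φ` holds at `(U, s)`
exactly when `φ[σ]` holds at `s` under `U`.
-/

section Validity

variable {P A : Type}

open EAL

@[simp]
lemma ealSat_imp {N : Kripke P A} {U : Set N.S} {s : N.S} {φ ψ : EAL P A} :
    ealSat N U s (imp φ ψ) ↔ (ealSat N U s φ → ealSat N U s ψ) := by
  simp [imp, EAL.or, ealSat]

@[simp]
lemma ealSat_dia {N : Kripke P A} {U : Set N.S} {s : N.S} {a : A} {φ : EAL P A} :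
    ealSat N U s (dia a φ) ↔ ∃ t, N.R a s t ∧ ealSat N (N.img a U) t φ := by
  simp [dia, ealSat]

lemma propEval_ealSat_iff (N : Kripke P A) (U : Set N.S) (s : N.S) (φ : EAL P A) :
    propEval (ealSat N U s) φ ↔ ealSat N U s φ := by
  induction φ with
  | top => simp [propEval, ealSat]
  | atom | box | know => rfl
  | neg φ ih => simp [propEval, ealSat, ih]
  | and φ ψ ih₁ ih₂ => simp [propEval, ealSat, ih₁, ih₂]

lemma ealValid_of_propEval {φ : EAL P A} (h : ∀ v : EAL P A → Prop, propEval v φ) :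
    ealValid φ :=
  fun N U _ s _ => (propEval_ealSat_iff N U s φ).mp (h _)

lemma ealValid_distK (φ ψ : EAL P A) :
    ealValid (imp (know (imp φ ψ)) (imp (know φ) (know ψ))) := by
  intro N U _ s _
  simp only [ealSat_imp, ealSat]
  exact fun hφψ hφ u hu => hφψ u hu (hφ u hu)

lemma ealValid_distBox (a : A) (φ ψ : EAL P A) :
    ealValid (imp (box a (imp φ ψ)) (imp (box a φ) (box a ψ))) := by
  intro N U _ s _
  simp only [ealSat_imp, ealSat]
  exact fun hφψ hφ t ht => hφψ t ht (hφ t ht)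

lemma ealValid_axT (φ : EAL P A) : ealValid (imp (know φ) φ) := by
  intro N U _ s hs
  simp only [ealSat_imp, ealSat]
  exact fun h => h s hs

lemma ealValid_ax4 (φ : EAL P A) : ealValid (imp (know φ) (know (know φ))) := by
  intro N U _ s _
  simp only [ealSat_imp, ealSat]
  exact fun h _ _ => h

lemma ealValid_ax5 (φ : EAL P A) : ealValid (imp (neg (know φ)) (know (neg (know φ)))) := by
  intro N U _ s _
  simp only [ealSat_imp, ealSat]
  exact fun h _ _ => h

lemma ealValid_zig (a : A) (φ : EAL P A) :
    ealValid (imp (know (box a φ)) (box a (know φ))) := by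
  intro N U _ s _
  simp only [ealSat_imp, ealSat]
  rintro h t - u ⟨u', hu', hR⟩
  exact h u' hu' u hR

lemma ealValid_zag (a : A) (φ : EAL P A) :
    ealValid (imp (dia a (know φ)) (know (box a φ))) := by
  intro N U _ s _
  simp only [ealSat_imp, ealSat_dia, ealSat]
  rintro ⟨-, -, h⟩ u hu t hR
  exact h t ⟨u, hu, hR⟩

lemma ealValid.mp {φ ψ : EAL P A} (hφψ : ealValid (imp φ ψ)) (hφ : ealValid φ) :
    ealValid ψ :=
  fun N U hU s hs => ealSat_imp.mp (hφψ N U hU s hs) (hφ N U hU s hs)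

lemma ealValid.know {φ : EAL P A} (h : ealValid φ) : ealValid (know φ) :=
  fun N U hU _ _ u hu => h N U hU u hu

lemma ealValid.box {φ : EAL P A} (a : A) (h : ealValid φ) : ealValid (box a φ) :=
  fun N U _ s hs t ht => h N (N.img a U) ⟨t, s, hs, ht⟩ t ⟨s, hs, ht⟩

end Validity

namespace Kripke

variable {P A : Type}

def substModel (σ : P → EAL P A) (N : Kripke P A) : Kripke P A where
  S := Set N.S × N.S
  R a x y := y.1 = N.img a x.1 ∧ N.R a x.2 y.2
  V x p := ealSat N x.1 x.2 (σ p)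

lemma substModel_img (σ : P → EAL P A) (N : Kripke P A) (a : A) (U : Set N.S) :
    (N.substModel σ).img a ({U} ×ˢ U) = {N.img a U} ×ˢ N.img a U := by
  ext ⟨V, t⟩
  constructor
  · rintro ⟨⟨U', u⟩, ⟨rfl, hu⟩, rfl, hR⟩
    exact ⟨rfl, u, hu, hR⟩
  · rintro ⟨rfl, u, hu, hR⟩
    exact ⟨(U, u), ⟨rfl, hu⟩, rfl, hR⟩

lemma ealSat_substModel_iff (σ : P → EAL P A) (N : Kripke P A) (φ : EAL P A)
    (U : Set N.S) (s : N.S) :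
    ealSat (N.substModel σ) ({U} ×ˢ U) (U, s) φ ↔ ealSat N U s (φ.subst σ) := by
  induction φ generalizing U s with
  | top | atom => rfl
  | neg φ ih => simp only [ealSat, EAL.subst, ih]
  | and φ ψ ih₁ ih₂ => simp only [ealSat, EAL.subst, ih₁, ih₂]
  | box a φ ih =>
    simp only [ealSat, EAL.subst, substModel_img, ← ih]
    constructor
    · exact fun h t hR => h (N.img a U, t) ⟨rfl, hR⟩
    · rintro h ⟨V, t⟩ ⟨rfl, hR⟩
      exact h t hR
  | know φ ih =>
    simp only [ealSat, EAL.subst, ← ih]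
    constructor
    · exact fun h u hu => h (U, u) ⟨rfl, hu⟩
    · rintro h ⟨V, u⟩ ⟨rfl, hu⟩
      exact h u hu

end Kripke

lemma ealValid.subst {P A : Type} {φ : EAL P A} (σ : P → EAL P A) (h : ealValid φ) :
    ealValid (φ.subst σ) := by
  intro N U hU s hs
  rw [← N.ealSat_substModel_iff]
  exact h _ _ (Set.singleton_nonempty U |>.prod hU) _ ⟨rfl, hs⟩

theorem SELA.soundness_general {P A : Type}
    (φ : EAL P A) (h : SELA φ) : ealValid φ := by
  induction h with
  | taut h => exact ealValid_of_propEval h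
  | distK => exact ealValid_distK _ _
  | distBox a => exact ealValid_distBox a _ _
  | axT => exact ealValid_axT _
  | ax4 => exact ealValid_ax4 _
  | ax5 => exact ealValid_ax5 _
  | zig a => exact ealValid_zig a _
  | zag a => exact ealValid_zag a _
  | mp _ _ ihφψ ihφ => exact ihφψ.mp ihφ
  | necK _ ih => exact ih.know
  | necBox a _ ih => exact ih.box a
  | sub σ _ ih => exact ih.subst σ

/-- Soundness of SELA: every EAL formula derivable in SELA is valid
on uncertainty maps, i.e., true at every pointed uncertainty map. -/
theorem SELA.soundness {P A : Type} [Countable P] [Countable A]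
    (φ : EAL P A) (h : SELA φ) : ealValid φ :=
  SELA.soundness_general φ h
end

section
/- The no-miracles axiom is valid on uncertainty maps: for every action symbol a and every EAL formula φ, the formula ⟨a⟩Kφ → K[a]φ is true at every pointed uncertainty map. -/
namespace ealSat

variable {P A : Type} (N : Kripke P A) (U : Set N.S) (s : N.S)

theorem imp_iff (φ ψ : EAL P A) :
    ealSat N U s (φ.imp ψ) ↔ (ealSat N U s φ → ealSat N U s ψ) := by
  simp only [EAL.imp, EAL.or, ealSat]
  tauto

theorem dia_iff (a : A) (φ : EAL P A) :
    ealSat N U s (EAL.dia a φ) ↔ ∃ t, N.R a s t ∧ ealSat N (N.img a U) t φ := by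
  simp only [EAL.dia, ealSat, not_forall, not_not, exists_prop]

theorem know_box_iff (a : A) (φ : EAL P A) :
    ealSat N U s (.know (.box a φ)) ↔ ∀ t ∈ N.img a U, ealSat N (N.img a U) t φ := by
  simp only [ealSat, Kripke.img, Set.mem_ofPred_eq, forall_exists_index, and_imp]
  exact ⟨fun h t u hu hut => h u hu t hut, fun h u hu t hut => h t u hu hut⟩

end ealSat

/-- Knowledge does not depend on the actual state, so `⟨a⟩Kφ` at `s` already yields `Kφ` on the
updated uncertainty set, which is what `K[a]φ` asserts. -/
theorem no_miracles_valid_general {P A : Type}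
    (a : A) (φ : EAL P A) :
    ealValid (EAL.imp (EAL.dia a (EAL.know φ)) (EAL.know (EAL.box a φ))) := by
  intro N U _ s _
  rw [ealSat.imp_iff, ealSat.dia_iff, ealSat.know_box_iff]
  rintro ⟨t, -, hKφ⟩
  exact hKφ

/-- The no-miracles axiom is valid on uncertainty maps: for every
action symbol a and every EAL formula φ, ⟨a⟩Kφ → K[a]φ is true at every pointed
uncertainty map. -/
theorem no_miracles_valid {P A : Type} [Countable P] [Countable A]
    (a : A) (φ : EAL P A) :
    ealValid (EAL.imp (EAL.dia a (EAL.know φ)) (EAL.know (EAL.box a φ))) :=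
  no_miracles_valid_general a φ
end
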